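/- Let A be a commutative ring and B a commutative A-algebra of finite type. Let J be a filtered category and F : J ⥤ (commutative A-algebras) a diagram with colimit C and canonical maps ι_j : F(j) → C. Then the canonical map colim_j Hom_{A-alg}(B, F(j)) → Hom_{A-alg}(B, C) is injective; concretely, for all objects i, j of J and A-algebra homomorphisms f : B → F(i) and g : B → F(j) with ι_i ∘ f = ι_j ∘ g, there exist an object k of J and morphisms u : i → k and v : j → k such that F(u) ∘ f = F(v) ∘ g. -/

import Mathlib

open CategoryTheory Limits

/-- Let `A` be a commutative ring and `B` a commutative `A`-algebra of finite type
(an object of the under category `Under A` of `CommRingCat`, whose structure morphism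
is a finite type ring homomorphism).  For every filtered diagram `F : J ⥤ Under A` of
commutative `A`-algebras, the canonical comparison map
`colim_j Hom_{A-alg}(B, F j) → Hom_{A-alg}(B, colim F)` is injective: any two
`A`-algebra homomorphisms `f : B ⟶ F i` and `g : B ⟶ F j` which become equal in the
colimit (computed, as for any filtered diagram of `A`-algebras, on underlying
commutative rings) are already coequalized by some transition maps of the diagram. -/
theorem finiteType_filtered_colimit_hom_comparison_injective
    (A : CommRingCat.{0}) (B : Under A) (hB : RingHom.FiniteType B.hom.hom)
    (J : Type) [SmallCategory J] [IsFiltered J] (F : J ⥤ Under A)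
    (i j : J) (f : B ⟶ F.obj i) (g : B ⟶ F.obj j)
    (h : f.right ≫ colimit.ι (F ⋙ Under.forget A) i
        = g.right ≫ colimit.ι (F ⋙ Under.forget A) j) :
    ∃ (k : J) (u : i ⟶ k) (v : j ⟶ k), f ≫ F.map u = g ≫ F.map v := by
  letI : Algebra ↥A ↥B.right := B.hom.hom.toAlgebra
  have hft : Algebra.FiniteType ↥A ↥B.right := hB
  obtain ⟨s, hs⟩ := hft.out
  -- key step: coequalize `f` and `g` on any finite set of elements
  classical
  have key : ∀ t : Finset ↥B.right, ∃ (k : J) (u : i ⟶ k) (v : j ⟶ k),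
      ∀ x ∈ t, (F.map u).right (f.right x) = (F.map v).right (g.right x) := by
    intro t
    induction t using Finset.induction_on with
    | empty =>
      exact ⟨IsFiltered.max i j, IsFiltered.leftToMax i j, IsFiltered.rightToMax i j,
        by simp⟩
    | @insert x t hx ih =>
      obtain ⟨k, u, v, hk⟩ := ih
      have hcol : colimit.ι (F ⋙ Under.forget A) i (f.right x)
          = colimit.ι (F ⋙ Under.forget A) j (g.right x) := by
        have := congrArg (fun φ : B.right ⟶ colimit (F ⋙ Under.forget A) => φ x) h
        exact this
      obtain ⟨k', u', v', hk'⟩ := Concrete.colimit_exists_of_rep_eq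
        (F ⋙ Under.forget A) (f.right x) (g.right x) hcol
      -- combine the two stages
      let m := IsFiltered.max k k'
      let τ : k ⟶ m := IsFiltered.leftToMax k k'
      let τ' : k' ⟶ m := IsFiltered.rightToMax k k'
      let a : i ⟶ m := u ≫ τ
      let b : i ⟶ m := u' ≫ τ'
      let n := IsFiltered.coeq a b
      let w : m ⟶ n := IsFiltered.coeqHom a b
      have hw : a ≫ w = b ≫ w := IsFiltered.coeq_condition a b
      let c : j ⟶ n := v ≫ τ ≫ w
      let d : j ⟶ n := v' ≫ τ' ≫ w
      let p := IsFiltered.coeq c d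
      let w₂ : n ⟶ p := IsFiltered.coeqHom c d
      have hw₂ : c ≫ w₂ = d ≫ w₂ := IsFiltered.coeq_condition c d
      refine ⟨p, u ≫ τ ≫ w ≫ w₂, v ≫ τ ≫ w ≫ w₂, ?_⟩
      intro y hy
      rcases Finset.mem_insert.mp hy with rfl | hy
      · -- the new element
        have e1 : (F.map (u ≫ τ ≫ w ≫ w₂)).right (f.right y)
            = (F.map (u' ≫ τ' ≫ w ≫ w₂)).right (f.right y) := by
          have : u ≫ τ ≫ w ≫ w₂ = u' ≫ τ' ≫ w ≫ w₂ := by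
            rw [← Category.assoc, ← Category.assoc, ← Category.assoc, ← Category.assoc]
            exact congrArg (· ≫ w₂) hw
          rw [this]
        have e2 : (F.map (u' ≫ τ' ≫ w ≫ w₂)).right (f.right y)
            = (F.map (v' ≫ τ' ≫ w ≫ w₂)).right (g.right y) := by
          have hk'' : (F.map u').right (f.right y) = (F.map v').right (g.right y) := hk'
          simp only [F.map_comp, Under.comp_right, CommRingCat.comp_apply, hk'']
        have e3 : (F.map (v' ≫ τ' ≫ w ≫ w₂)).right (g.right y)
            = (F.map (v ≫ τ ≫ w ≫ w₂)).right (g.right y) := by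
          have : v' ≫ τ' ≫ w ≫ w₂ = v ≫ τ ≫ w ≫ w₂ := by
            simpa [c, d, Category.assoc] using hw₂.symm
          rw [this]
        rw [e1, e2, e3]
      · -- old elements
        have := hk y hy
        simp only [F.map_comp, Under.comp_right, CommRingCat.comp_apply, this]
  obtain ⟨k, u, v, hk⟩ := key s
  refine ⟨k, u, v, ?_⟩
  apply CommaMorphism.ext
  · apply Subsingleton.elim
  · -- equality of the underlying ring homomorphisms, via generators
    ext b
    have hb : b ∈ Algebra.adjoin ↥A (s : Set ↥B.right) := hs ▸ Algebra.mem_top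
    simp only [Under.comp_right, CommRingCat.comp_apply]
    induction hb using Algebra.adjoin_induction with
    | mem y hy => exact hk y hy
    | algebraMap r =>
      have h1 : f.right (B.hom r) = (F.obj i).hom r := by
        have e := ConcreteCategory.congr_hom (Under.w f) r
        rw [CommRingCat.comp_apply] at e
        exact e
      have h2 : g.right (B.hom r) = (F.obj j).hom r := by
        have e := ConcreteCategory.congr_hom (Under.w g) r
        rw [CommRingCat.comp_apply] at e
        exact e
      have h3 : (F.map u).right ((F.obj i).hom r) = (F.obj k).hom r := by
        have e := ConcreteCategory.congr_hom (Under.w (F.map u)) r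
        rw [CommRingCat.comp_apply] at e
        exact e
      have h4 : (F.map v).right ((F.obj j).hom r) = (F.obj k).hom r := by
        have e := ConcreteCategory.congr_hom (Under.w (F.map v)) r
        rw [CommRingCat.comp_apply] at e
        exact e
      show (F.map u).right (f.right (B.hom r)) = (F.map v).right (g.right (B.hom r))
      rw [h1, h2, h3, h4]
    | add y z hy hz ihy ihz => simp only [map_add, ihy, ihz]
    | mul y z hy hz ihy ihz => simp only [map_mul, ihy, ihz]
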